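/- Let f : [0,1]×ℝ²→ℝ be continuous, fix ω ∈ C₀, and define f̂ : [0,1]×ℝ²→ℝ by f̂(t,x,y) = f(t, x + Y_t(ω), y + Y'_t(ω)). Then a function u ∈ C¹₀ satisfies u'(t) + ∫₀ᵗ f(s, u(s), u'(s)) ds = u'(0) + ω(t) for all t ∈ [0,1] if and only if the function z defined by z(t) = u(t) - Y_t(ω) is twice continuously differentiable on [0,1] and satisfies z''(t) + f̂(t, z(t), z'(t)) = 0 for all t ∈ [0,1] with z(0) = z(1) = 0. -/

import Mathlib

/-!
`Y(ω)` is `C¹` on `[0,1]` with derivative `Y'(ω)` and vanishes at both ends, so `z = u - Y(ω)`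
has `z' = u' - Y'(ω)` and the boundary values of `u`. Because `ω(0) = 0`, the integral equation
for `u` is exactly `z'(t) + ∫₀ᵗ f̂(s, z, z') ds = z'(0)`, and by the fundamental theorem of calculus
and the mean value theorem this says `z'' = -f̂(t, z, z')` with `z''` continuous.
-/

open MeasureTheory

/-- `Y_t(ω) = -t ∫₀¹ ω(s) ds + ∫₀ᵗ ω(s) ds`. -/
noncomputable def Yw (ω : ℝ → ℝ) (t : ℝ) : ℝ :=
  -t * (∫ s in (0:ℝ)..1, ω s) + ∫ s in (0:ℝ)..t, ω s

/-- `Y'_t(ω) = -∫₀¹ ω(s) ds + ω(t)`. -/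
noncomputable def Yw' (ω : ℝ → ℝ) (t : ℝ) : ℝ :=
  -(∫ s in (0:ℝ)..1, ω s) + ω t

/-- The shifted nonlinearity `f̂(t,x,y) = f(t, x + Y_t(ω), y + Y'_t(ω))`. -/
noncomputable def fhat (f : ℝ → ℝ → ℝ → ℝ) (ω : ℝ → ℝ) (t x y : ℝ) : ℝ :=
  f t (x + Yw ω t) (y + Yw' ω t)

open Set

theorem ContinuousOn.hasDerivWithinAt_integral_Icc {a b t : ℝ} {g : ℝ → ℝ}
    (hg : ContinuousOn g (Icc a b)) (ht : t ∈ Icc a b) :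
    HasDerivWithinAt (fun x => ∫ s in a..x, g s) (g t) (Icc a b) t := by
  have : Fact (t ∈ Icc a b) := ⟨ht⟩
  exact intervalIntegral.integral_hasDerivWithinAt_right
    ((hg.mono (Icc_subset_Icc_right ht.2)).intervalIntegrable_of_Icc ht.1)
    (hg.stronglyMeasurableAtFilter_nhdsWithin measurableSet_Icc t) (hg t ht)

theorem add_integral_eq_iff_hasDerivWithinAt {a b : ℝ} {v F : ℝ → ℝ}
    (hF : ContinuousOn F (Icc a b)) :
    (∀ t ∈ Icc a b, v t + ∫ s in a..t, F s = v a) ↔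
      ∀ t ∈ Icc a b, HasDerivWithinAt v (-F t) (Icc a b) t := by
  constructor
  · intro h t ht
    have hv : EqOn v (fun x => v a - ∫ s in a..x, F s) (Icc a b) := fun x hx => by
      linarith [h x hx]
    exact ((hF.hasDerivWithinAt_integral_Icc ht).const_sub (v a)).congr hv (hv ht)
  · intro h
    have hG : ∀ t ∈ Icc a b,
        HasDerivWithinAt (fun x => v x + ∫ s in a..x, F s) 0 (Icc a b) t := fun t ht => by
      simpa using (h t ht).fun_add (hF.hasDerivWithinAt_integral_Icc ht)
    intro t ht
    simpa using constant_of_derivWithin_zero (fun x hx => (hG x hx).differentiableWithinAt)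
      (fun x hx => (hG x (Ico_subset_Icc_self hx)).derivWithin
        (uniqueDiffOn_Icc (hx.1.trans_lt hx.2) x (Ico_subset_Icc_self hx))) t ht

theorem hasDerivWithinAt_Yw {ω : ℝ → ℝ} (hω : ContinuousOn ω (Icc 0 1)) {t : ℝ}
    (ht : t ∈ Icc (0:ℝ) 1) :
    HasDerivWithinAt (Yw ω) (Yw' ω t) (Icc 0 1) t :=
  (((hasDerivWithinAt_id t _).neg.mul_const (∫ s in (0:ℝ)..1, ω s)).add
    (hω.hasDerivWithinAt_integral_Icc ht)).congr_deriv (by simp [Yw'])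

@[simp] theorem Yw_zero (ω : ℝ → ℝ) : Yw ω 0 = 0 := by simp [Yw]

@[simp] theorem Yw_one (ω : ℝ → ℝ) : Yw ω 1 = 0 := by simp [Yw]

/-- `u` solves the integral equation iff `z = u - Y(ω)` is a `C²`
solution of the boundary value problem `z'' + f̂(t,z,z') = 0`, `z(0)=z(1)=0`. -/
theorem stmt6 (f : ℝ → ℝ → ℝ → ℝ)
    (hf : ContinuousOn (fun p : ℝ × ℝ × ℝ => f p.1 p.2.1 p.2.2)
      (Set.Icc 0 1 ×ˢ (Set.univ : Set (ℝ × ℝ))))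
    (ω : ℝ → ℝ) (hω : ContinuousOn ω (Set.Icc 0 1)) (hω0 : ω 0 = 0)
    (u u' : ℝ → ℝ)
    (hu : ∀ t ∈ Set.Icc (0:ℝ) 1, HasDerivWithinAt u (u' t) (Set.Icc 0 1) t)
    (hu'c : ContinuousOn u' (Set.Icc 0 1))
    (hu0 : u 0 = 0) (hu1 : u 1 = 0) :
    (∀ t ∈ Set.Icc (0:ℝ) 1,
        u' t + ∫ s in (0:ℝ)..t, f s (u s) (u' s) = u' 0 + ω t)
    ↔ (∃ z' z'' : ℝ → ℝ,
        (∀ t ∈ Set.Icc (0:ℝ) 1,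
          HasDerivWithinAt (fun τ => u τ - Yw ω τ) (z' t) (Set.Icc 0 1) t) ∧
        ContinuousOn z' (Set.Icc 0 1) ∧
        (∀ t ∈ Set.Icc (0:ℝ) 1, HasDerivWithinAt z' (z'' t) (Set.Icc 0 1) t) ∧
        ContinuousOn z'' (Set.Icc 0 1) ∧
        (∀ t ∈ Set.Icc (0:ℝ) 1,
          z'' t + fhat f ω t (u t - Yw ω t) (z' t) = 0) ∧
        u 0 - Yw ω 0 = 0 ∧ u 1 - Yw ω 1 = 0) := by
  set F : ℝ → ℝ := fun t => f t (u t) (u' t)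
  set v : ℝ → ℝ := fun t => u' t - Yw' ω t
  have huc : ContinuousOn u (Icc 0 1) := fun t ht => (hu t ht).continuousWithinAt
  have hFc : ContinuousOn F (Icc 0 1) :=
    hf.comp (continuousOn_id.prodMk (huc.prodMk hu'c)) fun t ht => ⟨ht, trivial⟩
  have hz : ∀ t ∈ Icc (0:ℝ) 1, HasDerivWithinAt (fun τ => u τ - Yw ω τ) (v t) (Icc 0 1) t :=
    fun t ht => (hu t ht).sub (hasDerivWithinAt_Yw hω ht)
  have hfhat : ∀ t, fhat f ω t (u t - Yw ω t) (v t) = F t := fun t => by simp [fhat, v, F]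
  have hint : (∀ t ∈ Icc (0:ℝ) 1, u' t + ∫ s in (0:ℝ)..t, F s = u' 0 + ω t) ↔
      ∀ t ∈ Icc (0:ℝ) 1, v t + ∫ s in (0:ℝ)..t, F s = v 0 := by
    simp only [v, Yw', hω0]
    exact forall₂_congr fun t _ => ⟨fun h => by linarith, fun h => by linarith⟩
  rw [hint, add_integral_eq_iff_hasDerivWithinAt hFc]
  constructor
  · intro hv
    exact ⟨v, fun t => -F t, hz, hu'c.sub (continuousOn_const.add hω), hv, hFc.neg,
      fun t _ => by rw [hfhat]; ring, by simp [hu0], by simp [hu1]⟩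
  · rintro ⟨z', z'', hz', -, hz'', -, hode, -, -⟩ t ht
    have hz'v : EqOn z' v (Icc 0 1) := fun x hx =>
      (uniqueDiffOn_Icc zero_lt_one x hx).eq_deriv _ (hz' x hx) (hz x hx)
    have hz''F : z'' t = -F t := by
      linarith [hfhat t, hz'v ht ▸ hode t ht]
    exact hz''F ▸ (hz'' t ht).congr (hz'v.symm) (hz'v ht).symm
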